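/- Let G be a connected r-regular graph with r ≥ 2, with n vertices and m edges, and for each i = 1,…,m let H_i be an r_1-regular graph on t ≥ 1 vertices (all H_i have the same number of vertices t and the same degree r_1). Then every real root α of the quadratic equation (2r_1 + r_1·t + t + 2)x² − (2r_1 + r_1·t + 2t + 4)x + 2 = 0 is an eigenvalue of the normalized Laplacian of the generalized subdivision-edge corona S(G)⊖∧_{i=1}^m H_i of multiplicity at least m − n; equivalently, (x − α)^{m−n} divides the characteristic polynomial of 𝓛(S(G)⊖∧_{i=1}^m H_i). -/

import Mathlib

open Matrix Polynomial

/-- Adjacency matrix over `ℝ` (with classical decidability). -/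
noncomputable def adjM {V : Type*} [Fintype V] [DecidableEq V] (G : SimpleGraph V) :
    Matrix V V ℝ :=
  letI : DecidableRel G.Adj := Classical.decRel _
  G.adjMatrix ℝ

/-- Degree of a vertex (with classical decidability). -/
noncomputable def cdeg {V : Type*} [Fintype V] (G : SimpleGraph V) (v : V) : ℕ :=
  letI : DecidableRel G.Adj := Classical.decRel _
  G.degree v

/-- The normalized Laplacian `𝓛(G) = I - D^{-1/2} A D^{-1/2}` of a finite graph. -/
noncomputable def normLap {V : Type*} [Fintype V] [DecidableEq V] (G : SimpleGraph V) :
    Matrix V V ℝ :=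
  1 - Matrix.diagonal (fun v => (Real.sqrt (cdeg G v))⁻¹) * adjM G
      * Matrix.diagonal (fun v => (Real.sqrt (cdeg G v))⁻¹)

/-- The generalized subdivision-edge corona `S(G) ⊖ ∧ᵢ Hᵢ`: take the subdivision `S(G)`
(vertices of `G` together with one inserted vertex per edge, each edge `uv` replaced by the
path `u–e–v`), add a disjoint copy of each `Hₑ`, and join the inserted vertex corresponding
to the edge `e` to every vertex of `Hₑ`. -/
def sec {n : ℕ} (G : SimpleGraph (Fin n)) (t : G.edgeSet → ℕ)
    (H : ∀ e : G.edgeSet, SimpleGraph (Fin (t e))) :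
    SimpleGraph (Fin n ⊕ (G.edgeSet ⊕ Σ e : G.edgeSet, Fin (t e))) :=
  SimpleGraph.fromRel (fun a b =>
    match a, b with
    | Sum.inl v, Sum.inr (Sum.inl e) => v ∈ (e : Sym2 (Fin n))
    | Sum.inr (Sum.inl e), Sum.inr (Sum.inr ⟨f, _⟩) => e = f
    | Sum.inr (Sum.inr ⟨e, w⟩), Sum.inr (Sum.inr ⟨f, w'⟩) =>
        ∃ h : e = f, (H f).Adj (h ▸ w) w'
    | _, _ => False)

/-!
A function `z` on the edges of `G` whose sum around every vertex vanishes (the kernel of the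
vertex–edge incidence matrix, of dimension at least `m - n`) lifts to the corona: put `0` on the
vertices of `G`, `a · z e` on the inserted vertex `e` and `z e` on every vertex of `Hₑ`. Such a
lift `y` satisfies `A y = (1 - α) D y` as soon as `a = 1 - (r₁ + 1) α` and `α` solves the
quadratic, and then `D^{1/2} y` is an eigenvector of `𝓛 = I - D^{-1/2} A D^{-1/2}` for `α`.
Since `t ≥ 1`, the lift is injective, so the eigenspace of `α` has dimension at least `m - n`.
-/

open Module Finset Sum

theorem Matrix.pow_finrank_dvd_charpoly_of_mulVec_eq_smul {ι K : Type*} [Fintype ι]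
    [DecidableEq ι] [Field K] (M : Matrix ι ι K) (α : K) (W : Submodule K (ι → K))
    (hW : ∀ x ∈ W, M *ᵥ x = α • x) :
    (X - C α) ^ finrank K W ∣ M.charpoly := by
  have hle : W ≤ Module.End.eigenspace M.mulVecLin α := fun x hx =>
    Module.End.mem_eigenspace_iff.2 (hW x hx)
  calc (X - C α) ^ finrank K W ∣ (X - C α) ^ M.charpoly.rootMultiplicity α := by
        rw [← charpoly_mulVecLin]
        exact pow_dvd_pow _
          ((Submodule.finrank_mono hle).trans (LinearMap.finrank_eigenspace_le _ _))
    _ ∣ M.charpoly := pow_rootMultiplicity_dvd _ _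

theorem Matrix.card_sub_card_le_finrank_ker_mulVecLin {ι κ K : Type*} [Fintype ι] [Fintype κ]
    [Field K] (A : Matrix ι κ K) :
    Fintype.card κ - Fintype.card ι ≤ finrank K (LinearMap.ker A.mulVecLin) := by
  have hrank := LinearMap.finrank_range_add_finrank_ker A.mulVecLin
  have hrange := Submodule.finrank_le (LinearMap.range A.mulVecLin)
  rw [finrank_fintype_fun_eq_card] at hrank hrange
  omega

theorem cdeg_eq_degree {V : Type*} [Fintype V] (K : SimpleGraph V) [DecidableRel K.Adj] (v : V) :
    cdeg K v = K.degree v := by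
  unfold cdeg; congr!

theorem cdeg_eq_card_neighborFinset {V : Type*} [Fintype V] (K : SimpleGraph V)
    [DecidableRel K.Adj] (v : V) : cdeg K v = #(K.neighborFinset v) := by
  rw [cdeg_eq_degree, SimpleGraph.card_neighborFinset_eq_degree]

theorem cdeg_ne_zero_of_adj {V : Type*} [Fintype V] {K : SimpleGraph V} {i j : V}
    (h : K.Adj i j) : cdeg K i ≠ 0 := by
  classical
  rw [cdeg_eq_degree]
  exact ((K.degree_pos_iff_exists_adj i).2 ⟨j, h⟩).ne'

theorem adjM_eq_adjMatrix {V : Type*} [Fintype V] [DecidableEq V] (K : SimpleGraph V)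
    [DecidableRel K.Adj] : adjM K = K.adjMatrix ℝ := by
  unfold adjM; congr!

theorem normLap_mulVec_sqrt_cdeg_mul {V : Type*} [Fintype V] [DecidableEq V] (K : SimpleGraph V)
    [DecidableRel K.Adj] (y : V → ℝ) (μ : ℝ)
    (hy : ∀ i, ∑ j ∈ K.neighborFinset i, y j = μ * cdeg K i * y i) :
    normLap K *ᵥ (fun i => √(cdeg K i) * y i) = (1 - μ) • fun i => √(cdeg K i) * y i := by
  ext i
  have hcancel : ∑ j ∈ K.neighborFinset i, (√(cdeg K j))⁻¹ * (√(cdeg K j) * y j) =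
      ∑ j ∈ K.neighborFinset i, y j := Finset.sum_congr rfl fun j hj => by
    have hj : cdeg K j ≠ 0 := cdeg_ne_zero_of_adj ((K.mem_neighborFinset i j).1 hj).symm
    rw [inv_mul_cancel_left₀ (by simpa using hj)]
  have hsqrt : (√(cdeg K i : ℝ))⁻¹ * cdeg K i = √(cdeg K i) := by
    nth_rw 2 [← Real.mul_self_sqrt (Nat.cast_nonneg (cdeg K i))]
    rw [← mul_assoc]
    exact inv_mul_mul_self (√(cdeg K i : ℝ))
  rw [normLap, sub_mulVec, one_mulVec, ← mulVec_mulVec, ← mulVec_mulVec, Pi.sub_apply,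
    mulVec_diagonal, adjM_eq_adjMatrix, SimpleGraph.adjMatrix_mulVec_apply]
  simp only [mulVec_diagonal, hcancel, hy, Pi.smul_apply, smul_eq_mul]
  linear_combination -(μ * y i) * hsqrt

theorem SimpleGraph.incMatrix_submatrix_mulVec_apply {V R : Type*} [Fintype V] [DecidableEq V]
    [NonAssocSemiring R] (G : SimpleGraph V) [DecidableRel G.Adj] (z : G.edgeSet → R) (v : V) :
    ((G.incMatrix R).submatrix id (↑) *ᵥ z) v =
      ∑ e : G.edgeSet, if v ∈ (e : Sym2 V) then z e else 0 := by
  simp [mulVec, dotProduct, SimpleGraph.incMatrix_apply', SimpleGraph.incidenceSet]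

def secLift {n : ℕ} (G : SimpleGraph (Fin n)) (t : ℕ) (a b : ℝ) :
    (G.edgeSet → ℝ) →ₗ[ℝ] (Fin n ⊕ (G.edgeSet ⊕ Σ _ : G.edgeSet, Fin t) → ℝ)
    where
  toFun z := Sum.elim 0 (Sum.elim (a • z) (fun p => b * z p.1))
  map_add' z z' := by ext (v | e | p) <;> simp [mul_add]
  map_smul' c z := by ext (v | e | p) <;> simp [mul_left_comm]

section SubdivisionEdgeCorona

variable {n t : ℕ} {G : SimpleGraph (Fin n)} {H : G.edgeSet → SimpleGraph (Fin t)}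

local notation "S" => sec G (fun _ => t) H

@[simp] theorem sec_adj_inl_inl (v v' : Fin n) : ¬ (S).Adj (inl v) (inl v') := by
  simp [sec]

@[simp] theorem sec_adj_inl_inr_inl (v : Fin n) (e : G.edgeSet) :
    (S).Adj (inl v) (inr (inl e)) ↔ v ∈ (e : Sym2 (Fin n)) := by
  simp [sec]

@[simp] theorem sec_adj_inl_inr_inr (v : Fin n) (p : Σ _ : G.edgeSet, Fin t) :
    ¬ (S).Adj (inl v) (inr (inr p)) := by
  simp [sec]

@[simp] theorem sec_adj_inr_inl_inr_inl (e e' : G.edgeSet) :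
    ¬ (S).Adj (inr (inl e)) (inr (inl e')) := by
  simp [sec]

@[simp] theorem sec_adj_inr_inl_inr_inr (e : G.edgeSet) (p : Σ _ : G.edgeSet, Fin t) :
    (S).Adj (inr (inl e)) (inr (inr p)) ↔ e = p.1 := by
  simp [sec]

@[simp] theorem sec_adj_inr_inr_inr_inr (e e' : G.edgeSet) (w w' : Fin t) :
    (S).Adj (inr (inr ⟨e, w⟩)) (inr (inr ⟨e', w'⟩)) ↔ e = e' ∧ (H e).Adj w w' := by
  simp only [sec, SimpleGraph.fromRel_adj, ne_eq, inr.injEq, Sigma.mk.injEq, not_and]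
  constructor
  · rintro ⟨-, ⟨rfl, h⟩ | ⟨rfl, h⟩⟩
    exacts [⟨rfl, h⟩, ⟨rfl, h.symm⟩]
  · rintro ⟨rfl, h⟩
    exact ⟨fun _ hw => (H e).irrefl (heq_iff_eq.1 hw ▸ h), .inl ⟨rfl, h⟩⟩

@[simp] theorem sec_adj_inr_inl_inl (e : G.edgeSet) (v : Fin n) :
    (S).Adj (inr (inl e)) (inl v) ↔ v ∈ (e : Sym2 (Fin n)) := by
  rw [SimpleGraph.adj_comm, sec_adj_inl_inr_inl]

@[simp] theorem sec_adj_inr_inr_inl (p : Σ _ : G.edgeSet, Fin t) (v : Fin n) :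
    ¬ (S).Adj (inr (inr p)) (inl v) := by
  rw [SimpleGraph.adj_comm]; exact sec_adj_inl_inr_inr v p

@[simp] theorem sec_adj_inr_inr_inr_inl (p : Σ _ : G.edgeSet, Fin t) (e : G.edgeSet) :
    (S).Adj (inr (inr p)) (inr (inl e)) ↔ p.1 = e := by
  rw [SimpleGraph.adj_comm, sec_adj_inr_inl_inr_inr, eq_comm]

@[simp] theorem secLift_inl (a b : ℝ) (z : G.edgeSet → ℝ) (v : Fin n) :
    secLift G t a b z (inl v) = 0 := rfl

@[simp] theorem secLift_inr_inl (a b : ℝ) (z : G.edgeSet → ℝ) (e : G.edgeSet) :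
    secLift G t a b z (inr (inl e)) = a * z e := rfl

@[simp] theorem secLift_inr_inr (a b : ℝ) (z : G.edgeSet → ℝ) (e : G.edgeSet) (w : Fin t) :
    secLift G t a b z (inr (inr ⟨e, w⟩)) = b * z e := rfl

theorem secLift_injective (ht : 0 < t) (a : ℝ) {b : ℝ} (hb : b ≠ 0) :
    Function.Injective (secLift G t a b) := fun z z' h =>
  funext fun e => mul_left_cancel₀ hb (by simpa using congrFun h (inr (inr ⟨e, ⟨0, ht⟩⟩)))

variable [DecidableRel G.Adj] {M : Type*} [AddCommMonoid M]
  (f : (Fin n ⊕ (G.edgeSet ⊕ Σ _ : G.edgeSet, Fin t)) → M)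

theorem sum_neighborFinset_sec_inl [DecidableRel (S).Adj] (v : Fin n) :
    ∑ j ∈ (S).neighborFinset (inl v), f j =
      ∑ e : G.edgeSet, if v ∈ (e : Sym2 (Fin n)) then f (inr (inl e)) else 0 := by
  simp [SimpleGraph.neighborFinset_eq_filter, sum_filter, Fintype.sum_sum_type]

theorem sum_neighborFinset_sec_inr_inl [DecidableRel (S).Adj] (e : G.edgeSet) :
    ∑ j ∈ (S).neighborFinset (inr (inl e)), f j =
      (∑ v, if v ∈ (e : Sym2 (Fin n)) then f (inl v) else 0) +
        ∑ w, f (inr (inr ⟨e, w⟩)) := by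
  simp only [SimpleGraph.neighborFinset_eq_filter, sum_filter, Fintype.sum_sum_type,
    Fintype.sum_sigma, sec_adj_inr_inl_inl, sec_adj_inr_inl_inr_inl, sec_adj_inr_inl_inr_inr,
    if_false, sum_const_zero, zero_add]
  rw [sum_eq_single e (fun e' _ he' => by simp [Ne.symm he']) (by simp)]
  simp

theorem sum_neighborFinset_sec_inr_inr [DecidableRel (S).Adj] [∀ e, DecidableRel (H e).Adj]
    (e : G.edgeSet) (w : Fin t) :
    ∑ j ∈ (S).neighborFinset (inr (inr ⟨e, w⟩)), f j =
      f (inr (inl e)) + ∑ w' ∈ (H e).neighborFinset w, f (inr (inr ⟨e, w'⟩)) := by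
  simp only [SimpleGraph.neighborFinset_eq_filter, sum_filter, Fintype.sum_sum_type,
    Fintype.sum_sigma, sec_adj_inr_inr_inl, sec_adj_inr_inr_inr_inl, sec_adj_inr_inr_inr_inr,
    if_false, sum_const_zero, sum_ite_eq, mem_univ, if_true, zero_add]
  rw [sum_eq_single e (fun e' _ he' => by simp [Ne.symm he']) (by simp)]
  simp

theorem cdeg_sec_inr_inl (e : G.edgeSet) : cdeg (S) (inr (inl e)) = 2 + t := by
  classical
  have hcard : ∑ v : Fin n, (if v ∈ (e : Sym2 (Fin n)) then 1 else 0) = 2 := by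
    rw [sum_boole, Nat.cast_id,
      ← Sym2.card_toFinset_of_not_isDiag _ (G.not_isDiag_of_mem_edgeSet e.2)]
    congr 1
    ext v
    simp [Sym2.mem_toFinset]
  rw [cdeg_eq_card_neighborFinset, card_eq_sum_ones, sum_neighborFinset_sec_inr_inl, hcard,
    sum_const, card_univ, Fintype.card_fin, smul_eq_mul, mul_one]

theorem cdeg_sec_inr_inr (e : G.edgeSet) (w : Fin t) :
    cdeg (S) (inr (inr ⟨e, w⟩)) = 1 + cdeg (H e) w := by
  classical
  rw [cdeg_eq_card_neighborFinset, card_eq_sum_ones, sum_neighborFinset_sec_inr_inr,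
    ← card_eq_sum_ones, cdeg_eq_card_neighborFinset]

theorem sqrt_cdeg_mul_secLift {r1 : ℕ} (hH : ∀ e w, cdeg (H e) w = r1) (a b : ℝ)
    (z : G.edgeSet → ℝ) :
    (fun i => √(cdeg (S) i) * secLift G t a b z i) =
      secLift G t (√(2 + t) * a) (√(1 + r1) * b) z := by
  ext (v | e | ⟨e, w⟩)
  · simp
  · simp [cdeg_sec_inr_inl, mul_assoc]
  · simp [cdeg_sec_inr_inr, hH, mul_assoc]

theorem sum_neighborFinset_secLift [DecidableRel (S).Adj] {r1 : ℕ}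
    (hH : ∀ e w, cdeg (H e) w = r1) {a b μ : ℝ} (hI : t * b = μ * (2 + t) * a)
    (hHe : a + r1 * b = μ * (1 + r1) * b) {z : G.edgeSet → ℝ}
    (hz : (G.incMatrix ℝ).submatrix id (↑) *ᵥ z = 0)
    (i : Fin n ⊕ (G.edgeSet ⊕ Σ _ : G.edgeSet, Fin t)) :
    ∑ j ∈ (S).neighborFinset i, secLift G t a b z j =
      μ * cdeg (S) i * secLift G t a b z i := by
  rcases i with v | e | ⟨e, w⟩
  · have hv : ∑ e : G.edgeSet, (if v ∈ (e : Sym2 (Fin n)) then z e else 0) = 0 := by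
      simpa [SimpleGraph.incMatrix_submatrix_mulVec_apply] using congrFun hz v
    rw [sum_neighborFinset_sec_inl]
    simpa [mul_sum, mul_ite] using congrArg (a * ·) hv
  · simp only [sum_neighborFinset_sec_inr_inl, cdeg_sec_inr_inl, secLift_inl, secLift_inr_inl,
      secLift_inr_inr, ite_self, sum_const_zero, sum_const, card_univ, Fintype.card_fin,
      nsmul_eq_mul, zero_add, Nat.cast_add, Nat.cast_ofNat]
    linear_combination z e * hI
  · classical
    have hdeg : (H e).degree w = r1 := by rw [← cdeg_eq_degree, hH]
    simp only [sum_neighborFinset_sec_inr_inr, cdeg_sec_inr_inr, hH, secLift_inr_inl,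
      secLift_inr_inr, sum_const, SimpleGraph.card_neighborFinset_eq_degree, hdeg, nsmul_eq_mul,
      Nat.cast_add, Nat.cast_one]
    linear_combination z e * hHe

end SubdivisionEdgeCorona

theorem stmt7 {n m t r1 : ℕ} (ht : 1 ≤ t)
    (G : SimpleGraph (Fin n)) [DecidableRel G.Adj]
    (hm : G.edgeFinset.card = m)
    (H : G.edgeSet → SimpleGraph (Fin t)) (hH : ∀ e w, cdeg (H e) w = r1)
    (α : ℝ)
    (hα : (2 * (r1 : ℝ) + r1 * t + t + 2) * α ^ 2
        - (2 * (r1 : ℝ) + r1 * t + 2 * t + 4) * α + 2 = 0) :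
    ((X : Polynomial ℝ) - Polynomial.C α) ^ (m - n)
      ∣ (normLap (sec G (fun _ => t) H)).charpoly := by
  classical
  -- With `b = 1`, the equation `A y = (1 - α) D y` at the vertices of `Hₑ` forces this `a`;
  -- at the inserted vertices it is then exactly `hα`.
  set a : ℝ := 1 - (1 + r1) * α
  set Φ := secLift G t (√(2 + t) * a) (√(1 + r1) * 1)
  set Z := LinearMap.ker ((G.incMatrix ℝ).submatrix id (Subtype.val : G.edgeSet → _)).mulVecLin
  have hW : ∀ x ∈ Z.map Φ, normLap (sec G (fun _ => t) H) *ᵥ x = α • x := by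
    rintro _ ⟨z, hz, rfl⟩
    have hwalk := sum_neighborFinset_secLift hH (a := a) (b := 1) (μ := 1 - α)
      (by linear_combination -hα) (by ring) (LinearMap.mem_ker.1 hz)
    rw [← sqrt_cdeg_mul_secLift hH, normLap_mulVec_sqrt_cdeg_mul _ _ _ hwalk, sub_sub_cancel]
  have hdim : m - n ≤ finrank ℝ (Z.map Φ) := by
    calc m - n = Fintype.card G.edgeSet - Fintype.card (Fin n) := by
          rw [← hm, G.edgeFinset_card, Fintype.card_fin]
      _ ≤ finrank ℝ Z := card_sub_card_le_finrank_ker_mulVecLin _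
      _ = finrank ℝ (Z.map Φ) :=
          (Submodule.equivMapOfInjective Φ (secLift_injective ht _ (by positivity)) Z).finrank_eq
  exact (pow_dvd_pow _ hdim).trans (pow_finrank_dvd_charpoly_of_mulVec_eq_smul _ _ _ hW)
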